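/- arXiv:2207.13570 — 2 statements merged into one kernel-verified Lean document; each statement's English description precedes it below -/
import Mathlib

section
/- The infimum over u ∈ H¹₀((−1,1)) of ∫_{−1}^{1} (u'(x)² + g(u(x))) dx, where g(y) = 0 for |y| ≤ 1 and g(y) = y² − 1 for |y| ≥ 1, equals 0 (attained by u ≡ 0), while the infimum of ∫_{−1}^{1} (u'(x)² + |u(x)−1||u(x)+1|) dx over the same class is strictly positive. -/
/-!
Near the origin the double well `|y - 1| |y + 1| = |y² - 1|` is at least `3/4`, so a competitor
with `|u| ≤ 1/2` on `[-1, 1]` pays at least `3/2` in potential energy. A competitor that reaches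
`|u| ≥ 1/2` somewhere must climb there from `u(-1) = 0`, and since `t² ≥ 2c|t| - c²` the kinetic
energy is at least `2c · (1/2) - 2c²`, which is `3/32` for `c = 1/8`. The convex potential
`max (y² - 1) 0` instead vanishes on `[-1, 1]`, so `u ≡ 0` has energy `0`.
-/

open Real Set intervalIntegral

lemma two_mul_mul_abs_sub_sq_le_sq (c t : ℝ) : 2 * c * |t| - c ^ 2 ≤ t ^ 2 := by
  nlinarith [sq_nonneg (|t| - c), sq_abs t]

lemma abs_sub_le_integral_abs_deriv {u : ℝ → ℝ} (hu : ContDiff ℝ 1 u) {a b x : ℝ}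
    (hx : x ∈ Icc a b) : |u x - u a| ≤ ∫ y in a..b, |deriv u y| := by
  have hu' : Continuous (deriv u) := hu.continuous_deriv le_rfl
  calc |u x - u a| = |∫ y in a..x, deriv u y| := by
        rw [integral_deriv_eq_sub (fun y _ => (hu.differentiable one_ne_zero).differentiableAt)
          (hu'.intervalIntegrable _ _)]
    _ ≤ ∫ y in a..x, |deriv u y| := abs_integral_le_integral_abs hx.1
    _ ≤ ∫ y in a..b, |deriv u y| :=
        integral_mono_interval le_rfl hx.1 hx.2 (.of_forall fun _ => abs_nonneg _)
          (hu'.abs.intervalIntegrable _ _)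

lemma integral_sq_deriv_ge {u : ℝ → ℝ} (hu : ContDiff ℝ 1 u) {a b x c : ℝ} (hc : 0 ≤ c)
    (hx : x ∈ Icc a b) : 2 * c * |u x - u a| - c ^ 2 * (b - a) ≤ ∫ y in a..b, deriv u y ^ 2 := by
  have hu' : Continuous (deriv u) := hu.continuous_deriv le_rfl
  calc 2 * c * |u x - u a| - c ^ 2 * (b - a)
      ≤ 2 * c * (∫ y in a..b, |deriv u y|) - c ^ 2 * (b - a) := by
        gcongr
        exact abs_sub_le_integral_abs_deriv hu hx
    _ = ∫ y in a..b, (2 * c * |deriv u y| - c ^ 2) := by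
        rw [integral_sub ((hu'.abs.intervalIntegrable _ _).const_mul _) intervalIntegrable_const,
          integral_const_mul, integral_const, smul_eq_mul]
        ring
    _ ≤ ∫ y in a..b, deriv u y ^ 2 :=
        integral_mono_on (hx.1.trans hx.2) (Continuous.intervalIntegrable (by fun_prop) _ _) ((hu'.pow 2).intervalIntegrable _ _)
          fun y _ => two_mul_mul_abs_sub_sq_le_sq c (deriv u y)

lemma three_div_four_le_abs_sub_one_mul_abs_add_one {y : ℝ} (hy : |y| ≤ 1 / 2) :
    3 / 4 ≤ |y - 1| * |y + 1| := by
  rw [← abs_mul, abs_of_nonpos (by nlinarith [abs_le.mp hy])]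
  nlinarith [sq_abs y, abs_nonneg y]

lemma three_div_thirtyTwo_le_integral_sq_deriv_add_doubleWell {u : ℝ → ℝ} (hu : ContDiff ℝ 1 u)
    (hu₀ : u (-1) = 0) :
    3 / 32 ≤ ∫ x in (-1 : ℝ)..1, (deriv u x ^ 2 + |u x - 1| * |u x + 1|) := by
  have hu' : Continuous (deriv u) := hu.continuous_deriv le_rfl
  have hE : IntervalIntegrable (fun x => deriv u x ^ 2 + |u x - 1| * |u x + 1|) MeasureTheory.volume (-1) 1 :=
    Continuous.intervalIntegrable (by fun_prop) _ _
  by_cases hclimb : ∃ x ∈ Icc (-1 : ℝ) 1, 1 / 2 ≤ |u x|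
  · obtain ⟨x, hx, hux⟩ := hclimb
    have hkin := integral_sq_deriv_ge hu (c := 1 / 8) (by norm_num) hx
    rw [hu₀, sub_zero] at hkin
    calc (3 / 32 : ℝ) ≤ 2 * (1 / 8) * |u x| - (1 / 8) ^ 2 * (1 - -1) := by linarith
      _ ≤ ∫ y in (-1 : ℝ)..1, deriv u y ^ 2 := hkin
      _ ≤ _ := integral_mono_on (by norm_num) ((hu'.pow 2).intervalIntegrable _ _) hE
          fun y _ => le_add_of_nonneg_right (by positivity)
  · push Not at hclimb
    calc (3 / 32 : ℝ) ≤ ∫ _ in (-1 : ℝ)..1, (3 / 4 : ℝ) := by norm_num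
      _ ≤ _ := integral_mono_on (by norm_num) intervalIntegrable_const hE fun y hy =>
          (three_div_four_le_abs_sub_one_mul_abs_add_one (hclimb y hy).le).trans
            (le_add_of_nonneg_left (sq_nonneg _))

/-- For the double-well lower-order term `f₁(y) = |y−1||y+1|`, the convexified
functional `∫ u'² + max(u²−1,0)` has infimum 0 over functions vanishing at ±1,
while the original nonconvex functional `∫ u'² + |u−1||u+1|` has a strictly
positive infimum. -/
theorem convexified_vs_nonconvex_infimum :
    sInf {v : ℝ | ∃ u : ℝ → ℝ, ContDiff ℝ 1 u ∧ u (-1) = 0 ∧ u 1 = 0 ∧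
        v = ∫ x in (-1 : ℝ)..1, ((deriv u x) ^ 2 + max ((u x) ^ 2 - 1) 0)} = 0 ∧
    0 < sInf {v : ℝ | ∃ u : ℝ → ℝ, ContDiff ℝ 1 u ∧ u (-1) = 0 ∧ u 1 = 0 ∧
        v = ∫ x in (-1 : ℝ)..1, ((deriv u x) ^ 2 + |u x - 1| * |u x + 1|)} := by
  refine ⟨IsLeast.csInf_eq ⟨⟨0, contDiff_const, rfl, rfl, by simp⟩, ?_⟩, ?_⟩
  · rintro v ⟨u, -, -, -, rfl⟩
    exact integral_nonneg (by norm_num) fun x _ => by positivity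
  · refine (by norm_num : (0 : ℝ) < 3 / 32).trans_le (le_csInf ?_ ?_)
    · exact ⟨_, 0, contDiff_const, rfl, rfl, rfl⟩
    · rintro v ⟨u, hu, hu₀, -, rfl⟩
      exact three_div_thirtyTwo_le_integral_sq_deriv_add_doubleWell hu hu₀
end

section
/- Let μ be the measure on [−1,1] × ℝ × ℝ given by μ = (1/2) dx ⊗ (δ_{1/√2} + δ_{−1/√2}) ⊗ δ₀ (in coordinates (x, y, z)), and let ν be the measure on {−1,1} × ℝ given by ν = (1/2)(δ_{−1} + δ₁) ⊗ (δ_{1/√2} + δ_{−1/√2}). Then: (i) ∫ y dμ = 0; (ii) ∫ y² dμ = 1; (iii) ∫ z² dμ = 0; (iv) for every C¹ function φ : [−1,1] × ℝ → ℝ, ∫ (∂_x φ(x,y) + ∂_y φ(x,y)·z) dμ(x,y,z) = ∫ φ(x,y)·x dν(x,y). Consequently μ satisfies all linear occupation-measure constraints of the mean-zero Poincaré problem while achieving objective value 0 < π²/4. -/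
open Real Set MeasureTheory

/-!
On each of its two atoms `y = ±1/√2` the measure `μ` puts `z = 0`, so the `∂_y φ` term of the
divergence identity vanishes and what is left is the fundamental theorem of calculus for
`x ↦ φ (x, ±1/√2)` on `[-1, 1]`, whose boundary values are exactly what `ν` records. The relaxation
accepts `μ` because nothing in it ties `z` to the derivative of `y` along `x`.
-/

namespace MeasureTheory

variable {α β E : Type*} [MeasurableSpace α] [MeasurableSpace β] [NormedAddCommGroup E]

section Dirac

variable [MeasurableSingletonClass β] {μ : Measure α} [SFinite μ] {f : α × β → E} {y y₁ y₂ : β}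

theorem integrable_prod_dirac_iff :
    Integrable f (μ.prod (Measure.dirac y)) ↔ Integrable (fun x ↦ f (x, y)) μ := by
  rw [Measure.prod_dirac, (measurableEmbedding_prod_mk_right y).integrable_map_iff]
  rfl

variable [NormedSpace ℝ E]

theorem integral_prod_dirac (f : α × β → E) (y : β) :
    ∫ q, f q ∂μ.prod (Measure.dirac y) = ∫ x, f (x, y) ∂μ := by
  rw [Measure.prod_dirac, (measurableEmbedding_prod_mk_right y).integral_map]

theorem integral_prod_dirac_add_dirac (hf₁ : Integrable (fun x ↦ f (x, y₁)) μ)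
    (hf₂ : Integrable (fun x ↦ f (x, y₂)) μ) :
    ∫ q, f q ∂μ.prod (Measure.dirac y₁ + Measure.dirac y₂) =
      ∫ x, f (x, y₁) ∂μ + ∫ x, f (x, y₂) ∂μ := by
  rw [Measure.prod_add, integral_add_measure (integrable_prod_dirac_iff.2 hf₁)
    (integrable_prod_dirac_iff.2 hf₂), integral_prod_dirac, integral_prod_dirac]

end Dirac

variable [MeasurableSingletonClass α]

theorem integrable_dirac_add_dirac (f : α → E) (a b : α) :
    Integrable f (Measure.dirac a + Measure.dirac b) :=
  (integrable_dirac enorm_lt_top).add_measure (integrable_dirac enorm_lt_top)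

theorem integral_dirac_add_dirac [NormedSpace ℝ E] [CompleteSpace E] (f : α → E) (a b : α) :
    ∫ x, f x ∂(Measure.dirac a + Measure.dirac b) = f a + f b := by
  rw [integral_add_measure (integrable_dirac enorm_lt_top) (integrable_dirac enorm_lt_top),
    integral_dirac, integral_dirac]

end MeasureTheory

theorem integral_Icc_fderiv_apply_fst {E F : Type*} [NormedAddCommGroup E] [NormedSpace ℝ E]
    [NormedAddCommGroup F] [NormedSpace ℝ F] [CompleteSpace F] {φ : ℝ × E → F}
    (hφ : ContDiff ℝ 1 φ) {a b : ℝ} (hab : a ≤ b) (y : E) :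
    ∫ x in Icc a b, fderiv ℝ φ (x, y) (1, 0) = φ (b, y) - φ (a, y) := by
  rw [integral_Icc_eq_integral_Ioc, ← intervalIntegral.integral_of_le hab]
  refine intervalIntegral.integral_eq_sub_of_hasDerivAt (f := fun x ↦ φ (x, y)) (fun x _ ↦ ?_) ?_
  · exact (hφ.differentiable one_ne_zero (x, y)).hasFDerivAt.comp_hasDerivAt x
      ((hasDerivAt_id x).prodMk (hasDerivAt_const x y))
  · exact (((hφ.continuous_fderiv one_ne_zero).comp (by fun_prop)).clm_apply
      continuous_const).intervalIntegrable _ _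

/-- The explicit occupation/boundary measure pair
`μ = ½ dx ⊗ (δ_{1/√2} + δ_{−1/√2}) ⊗ δ₀` on `[−1,1] × ℝ × ℝ` and
`ν = ½ (δ_{−1} + δ_{1}) ⊗ (δ_{1/√2} + δ_{−1/√2})` satisfies all the linear
occupation-measure constraints of the mean-zero Poincaré problem
(⟨y,μ⟩ = 0, ⟨y²,μ⟩ = 1, ⟨z²,μ⟩ = 0, and the divergence identity for every
`C¹` test function), while its objective value `⟨z²,μ⟩ = 0` is below `π²/4`. -/
theorem poincare_occupation_measure_feasible :
    let a : ℝ := 1 / Real.sqrt 2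
    let μ : Measure (ℝ × ℝ × ℝ) :=
      (2⁻¹ : ENNReal) • ((volume.restrict (Set.Icc (-1 : ℝ) 1)).prod
        ((Measure.dirac a + Measure.dirac (-a)).prod (Measure.dirac (0 : ℝ))))
    let ν : Measure (ℝ × ℝ) :=
      (2⁻¹ : ENNReal) • ((Measure.dirac (-1 : ℝ) + Measure.dirac (1 : ℝ)).prod
        (Measure.dirac a + Measure.dirac (-a)))
    (∫ q, q.2.1 ∂μ) = 0 ∧
    (∫ q, q.2.1 ^ 2 ∂μ) = 1 ∧
    (∫ q, q.2.2 ^ 2 ∂μ) = 0 ∧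
    (∀ φ : ℝ × ℝ → ℝ, ContDiff ℝ 1 φ →
      (∫ q, (fderiv ℝ φ (q.1, q.2.1) (1, 0) + fderiv ℝ φ (q.1, q.2.1) (0, 1) * q.2.2) ∂μ)
        = ∫ q, φ q * q.1 ∂ν) ∧
    (0 : ℝ) < π ^ 2 / 4 := by
  intro a μ ν
  have ha : a ^ 2 = 2⁻¹ := by simp [a]
  have hμ (f : ℝ × ℝ × ℝ → ℝ) (hf : Continuous f) : ∫ q, f q ∂μ =
      2⁻¹ * ((∫ x in Icc (-1) 1, f (x, a, 0)) + ∫ x in Icc (-1) 1, f (x, -a, 0)) := by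
    rw [integral_smul_measure, Measure.add_prod, Measure.dirac_prod_dirac,
      Measure.dirac_prod_dirac, integral_prod_dirac_add_dirac
        (hf.comp (by fun_prop)).integrableOn_Icc (hf.comp (by fun_prop)).integrableOn_Icc]
    norm_num
  have hν (f : ℝ × ℝ → ℝ) : ∫ q, f q ∂ν =
      2⁻¹ * (f (-1, a) + f (1, a) + (f (-1, -a) + f (1, -a))) := by
    rw [integral_smul_measure, integral_prod_dirac_add_dirac (integrable_dirac_add_dirac _ _ _)
      (integrable_dirac_add_dirac _ _ _), integral_dirac_add_dirac, integral_dirac_add_dirac]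
    norm_num
  refine ⟨?_, ?_, ?_, fun φ hφ ↦ ?_, by positivity⟩
  · rw [hμ _ (by fun_prop)]
    simp
  · rw [hμ _ (by fun_prop)]
    norm_num [ha]
  · rw [hμ _ (by fun_prop)]
    simp
  · have hDφ := hφ.continuous_fderiv one_ne_zero
    rw [hμ, hν]
    · simp only [mul_zero, add_zero, integral_Icc_fderiv_apply_fst hφ (by norm_num : (-1 : ℝ) ≤ 1)]
      ring
    · fun_prop
end
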